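/- Let C be a small category with a terminal object, let I be a separating interval of the presheaf category Ĉ, and let j: I → J be a monomorphism of intervals. For a presheaf X on C, let X_0 denote the constant presheaf at the set X(terminal) and let 𝒥(X) be the pushout of X × I ← X_0 × I → X_0 × J. Then 𝒥, equipped with the natural transformations ∂^ε_X: X ≅ X × {ε} → X × I → 𝒥(X) (ε = 0,1) and σ_X: 𝒥(X) ⊆ X × J → X (induced by the first projection), is a functorial cylinder on C which is moreover an elementary homotopical datum: 𝒥 preserves small colimits and monomorphisms, and for every monomorphism K → L and ε = 0,1 the naturality square with vertical arrows ∂^ε_K and ∂^ε_L is a pullback. -/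

import Mathlib

/-!
STATEMENT 2 (Proposition 3.6 of the paper).  Let `C` be a small category with a
terminal object, `I` a separating interval of the presheaf category `Ĉ` and
`j : I ⟶ J` a monomorphism of intervals.  For a presheaf `X`, let `X₀` be the
constant presheaf at `X(terminal)` and let `𝒥(X)` be the pushout of
`X × I ← X₀ × I → X₀ × J`.  Then `𝒥`, with the indicated structure maps, is a
functorial cylinder on `C` which is an elementary homotopical datum.
-/

open CategoryTheory CategoryTheory.Limits Opposite

universe u

namespace Paper

variable {C : Type u} [SmallCategory C] [HasTerminal C]

/-- The category of presheaves of sets on a small category. -/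
abbrev Psh (A : Type u) [SmallCategory A] := Aᵒᵖ ⥤ Type u

/-- The constant presheaf at a set `S`. -/
def constPsh (S : Type u) : Psh C := (Functor.const _).obj S

/-- The map of constant presheaves induced by a map of sets. -/
def constMap {S S' : Type u} (φ : S → S') : (constPsh (C := C) S) ⟶ constPsh S' where
  app _ := TypeCat.ofHom φ

/-- `X₀`: the constant presheaf at the set `X(terminal)`. -/
def zeroth (X : Psh C) : Psh C := constPsh (X.obj (op (⊤_ C)))

/-- The canonical morphism `i_X : X₀ ⟶ X`. -/
noncomputable def iX (X : Psh C) : zeroth X ⟶ X where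
  app c := TypeCat.ofHom (fun s => X.map (terminal.from c.unop).op s)
  naturality c d f := by
    ext s
    have h : (terminal.from (unop c)).op ≫ f = (terminal.from (unop d)).op := by
      apply Quiver.Hom.unop_inj
      apply terminal.hom_ext
    rw [← h, Functor.map_comp]
    rfl

variable (I J : Psh C) (j : I ⟶ J)

/-- The cylinder object `𝒥(X) = (X × I) ⊔_{X₀ × I} (X₀ × J)`. -/
noncomputable def cylObj (X : Psh C) : Psh C :=
  pushout (prod.map (iX X) (𝟙 I)) (prod.map (𝟙 (zeroth X)) j)

/-- The morphism `X₀ ⟶ Y₀` induced by `u : X ⟶ Y`. -/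
noncomputable def zerothMap {X Y : Psh C} (u : X ⟶ Y) : zeroth X ⟶ zeroth Y :=
  constMap (u.app (op (⊤_ C)))

lemma iX_natural {X Y : Psh C} (u : X ⟶ Y) :
    zerothMap u ≫ iX Y = iX X ≫ u := by
  ext c s
  exact (NatTrans.naturality_apply u (terminal.from c.unop).op s).symm

lemma zerothMap_id (X : Psh C) : zerothMap (𝟙 X) = 𝟙 (zeroth X) := rfl

lemma zerothMap_comp {X Y Z : Psh C} (u : X ⟶ Y) (v : Y ⟶ Z) :
    zerothMap (u ≫ v) = zerothMap u ≫ zerothMap v := rfl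

/-- Functoriality of `𝒥` on morphisms. -/
noncomputable def cylMap {X Y : Psh C} (u : X ⟶ Y) : cylObj I J j X ⟶ cylObj I J j Y :=
  pushout.desc (prod.map u (𝟙 I) ≫ pushout.inl _ _)
    (prod.map (zerothMap u) (𝟙 J) ≫ pushout.inr _ _)
    (by
      calc prod.map (iX X) (𝟙 I) ≫ prod.map u (𝟙 I) ≫ pushout.inl _ _
          = prod.map (zerothMap u) (𝟙 I) ≫ prod.map (iX Y) (𝟙 I) ≫ pushout.inl _ _ := by
            rw [← Category.assoc, ← Category.assoc, prod.map_map, prod.map_map, iX_natural]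
        _ = prod.map (zerothMap u) (𝟙 I) ≫ prod.map (𝟙 _) j ≫ pushout.inr _ _ := by
            rw [pushout.condition]
        _ = prod.map (𝟙 _) j ≫ prod.map (zerothMap u) (𝟙 J) ≫ pushout.inr _ _ := by
            rw [← Category.assoc, ← Category.assoc, prod.map_map, prod.map_map,
              Category.comp_id, Category.id_comp, Category.comp_id, Category.id_comp])

/-- The functorial cylinder `𝒥 : Ĉ ⥤ Ĉ`. -/
noncomputable def cyl : Psh C ⥤ Psh C where
  obj := cylObj I J j
  map := cylMap I J j
  map_id X := by
    dsimp only [cylObj]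
    apply pushout.hom_ext
    · erw [pushout.inl_desc, prod.map_id_id, Category.id_comp]
    · erw [pushout.inr_desc, zerothMap_id, prod.map_id_id, Category.id_comp]
  map_comp {X Y Z} u v := by
    apply pushout.hom_ext
    · erw [pushout.inl_desc, pushout.inl_desc_assoc, Category.assoc, pushout.inl_desc,
        prod.map_map_assoc, Category.comp_id]
    · erw [pushout.inr_desc, pushout.inr_desc_assoc, Category.assoc, pushout.inr_desc,
        prod.map_map_assoc, Category.comp_id, zerothMap_comp]

/-- The end inclusion `∂ε_X : X ⟶ 𝒥(X)`, for `ε = 0, 1` given by the two points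
`e : ⊤ ⟶ I` of the interval. -/
noncomputable def cylIncl (e : ⊤_ (Psh C) ⟶ I) (X : Psh C) : X ⟶ cylObj I J j X :=
  prod.lift (𝟙 X) (terminal.from X ≫ e) ≫ pushout.inl _ _

/-- The projection `σ_X : 𝒥(X) ⟶ X` (restriction of the first projection
`X × J ⟶ X`). -/
noncomputable def cylProj (X : Psh C) : cylObj I J j X ⟶ X :=
  pushout.desc prod.fst (prod.fst ≫ iX X)
    (by rw [prod.map_fst, ← Category.assoc, prod.map_fst, Category.assoc,
          Category.id_comp])

/-!
Colimits in presheaves are computed pointwise, so `𝒥` is a pushout of the three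
colimit-preserving functors `X ↦ X₀ × I`, `X ↦ X × I`, `X ↦ X₀ × J`, hence preserves colimits.
Presheaves form an adhesive category and `X₀ × I ⟶ X₀ × J` is mono, so the square defining `𝒥X`
is also a pullback and `X × I ⟶ 𝒥X` is mono. Using this, the naturality square of
`X × I ⟶ 𝒥X` at any `f : K ⟶ L` is a pullback. Pasting it with the graph square of
`X ⟶ X × I` gives (HD2). It also reduces the injectivity of `𝒥f` to points coming from
`X₀ × J` but not from `X₀ × I`, and on those the pushout map is injective.
The ends `∂⁰`, `∂¹` are split by `σ`, and their images are disjoint because those of `e₀`, `e₁` are.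
-/

section ColimitsOfFunctors

variable {𝒜 ℬ : Type*} [Category 𝒜] [Category ℬ]

lemma preservesColimitsOfSize_colimit {K : Type*} [Category K] [HasColimitsOfShape K ℬ]
    [PreservesColimitsOfSize.{w, w'} (colim : (K ⥤ ℬ) ⥤ ℬ)]
    (F : K ⥤ 𝒜 ⥤ ℬ) [∀ k, PreservesColimitsOfSize.{w, w'} (F.obj k)] :
    PreservesColimitsOfSize.{w, w'} (colimit F) :=
  have : PreservesColimitsOfSize.{w, w'} F.flip := preservesColimits_of_evaluation _ fun k =>
    preservesColimits_of_natIso (flipCompEvaluation F k).symm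
  preservesColimits_of_natIso (colimitIsoFlipCompColim F).symm

lemma preservesColimitsOfSize_of_isPushout [HasPushouts ℬ]
    [PreservesColimitsOfSize.{w, w'} (colim : (WalkingSpan ⥤ ℬ) ⥤ ℬ)]
    {F₁ F₂ F₃ F₄ : 𝒜 ⥤ ℬ} {α : F₁ ⟶ F₂} {β : F₁ ⟶ F₃} {γ : F₂ ⟶ F₄} {δ : F₃ ⟶ F₄}
    (h : IsPushout α β γ δ) [PreservesColimitsOfSize.{w, w'} F₁]
    [PreservesColimitsOfSize.{w, w'} F₂] [PreservesColimitsOfSize.{w, w'} F₃] :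
    PreservesColimitsOfSize.{w, w'} F₄ :=
  have : ∀ k, PreservesColimitsOfSize.{w, w'} ((span α β).obj k) := by
    rintro (_ | _ | _) <;> assumption
  have := preservesColimitsOfSize_colimit (span α β)
  preservesColimits_of_natIso h.isoPushout.symm

end ColimitsOfFunctors

section Pullbacks

variable {𝒞 : Type*} [Category 𝒞] [HasBinaryProducts 𝒞]

lemma isPullback_prod_map_id {A B X Y : 𝒞} (f : A ⟶ B) (g : X ⟶ Y) :
    IsPullback (prod.map (𝟙 A) g) (prod.map f (𝟙 X)) (prod.map f (𝟙 Y)) (prod.map (𝟙 B) g) :=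
  .of_isLimit' ⟨by simp⟩ <| PullbackCone.IsLimit.mk _
    (fun s => prod.lift (s.fst ≫ prod.fst) (s.snd ≫ prod.snd))
    (fun s => by
      ext
      · simp [prod.lift_fst]
      · simpa [prod.lift_fst, prod.lift_snd] using (congr_arg (· ≫ prod.snd) s.condition).symm)
    (fun s => by
      ext
      · simpa [prod.lift_fst, prod.lift_snd] using congr_arg (· ≫ prod.fst) s.condition
      · simp [prod.lift_snd])
    (fun s m h₁ h₂ => by
      ext
      · simpa [prod.lift_fst] using congr_arg (· ≫ prod.fst) h₁
      · simpa [prod.lift_snd] using congr_arg (· ≫ prod.snd) h₂)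

lemma isPullback_prod_lift_id {K L I : 𝒞} (f : K ⟶ L) {g : K ⟶ I} {g' : L ⟶ I}
    (hg : f ≫ g' = g) :
    IsPullback f (prod.lift (𝟙 K) g) (prod.lift (𝟙 L) g') (prod.map f (𝟙 I)) := by
  subst hg
  exact .of_bot (by simpa [prod.lift_fst] using IsPullback.id_vert f)
    (by ext <;> simp [prod.lift_fst, prod.lift_snd]) (IsPullback.of_prod_fst_with_id f I).flip

end Pullbacks

lemma Types.eq_or_mem_range_of_isPushout {X₁ X₂ X₃ X₄ : Type u} {t : X₁ ⟶ X₂} {l : X₁ ⟶ X₃}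
    {r : X₂ ⟶ X₄} {b : X₃ ⟶ X₄} (h : IsPushout t l r b) (hl : Function.Injective l)
    {x y : X₃} (hxy : b x = b y) : x = y ∨ x ∈ Set.range l := by
  have : Mono l := (mono_iff_injective l).2 hl
  let e := h.flip.isColimit.coconePointUniqueUpToIso (Types.Pushout.isColimitCocone l t)
  have he (z : X₃) : e.hom (b z) = Types.Pushout.inl l t z :=
    ConcreteCategory.congr_hom
      (h.flip.isColimit.comp_coconePointUniqueUpToIso_hom _ WalkingSpan.left) z
  have hrel := (Types.Pushout.quot_mk_eq_iff l t (.inl x) (.inl y)).1 <| by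
    have := congr_arg e.hom hxy
    rwa [he, he] at this
  rw [Types.Pushout.inl_rel'_inl_iff] at hrel
  obtain rfl | ⟨x₀, -, -, rfl, -⟩ := hrel
  · exact .inl rfl
  · exact .inr ⟨x₀, rfl⟩

section TypeValuedFunctors

variable {𝒞 : Type*} [Category 𝒞]

lemma app_apply_of_comp_eq {F G H : 𝒞 ⥤ Type u} {a : F ⟶ G} {b : G ⟶ H} {h : F ⟶ H}
    (w : a ≫ b = h) (c : 𝒞) (x : F.obj c) : b.app c (a.app c x) = h.app c x :=
  ConcreteCategory.congr_hom (NatTrans.congr_app w c) x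

lemma mono_coprod_desc_of_disjoint {X Y Z : 𝒞 ⥤ Type u} (a : X ⟶ Z) (b : Y ⟶ Z)
    [Mono a] [Mono b] (hab : ∀ c x y, a.app c x ≠ b.app c y) : Mono (coprod.desc a b) := by
  refine (NatTrans.mono_iff_mono_app _).2 fun c => (mono_iff_injective _).2 ?_
  have cases (w : (X ⨿ Y).obj c) :
      (∃ x, (coprod.inl : X ⟶ X ⨿ Y).app c x = w) ∨ ∃ y, (coprod.inr : Y ⟶ X ⨿ Y).app c y = w := by
    obtain ⟨x | y, rfl⟩ := (FunctorToTypes.binaryCoproductEquiv X Y c).symm.surjective w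
    · exact .inl ⟨x, rfl⟩
    · exact .inr ⟨y, rfl⟩
  have hinl := app_apply_of_comp_eq (coprod.inl_desc a b) c
  have hinr := app_apply_of_comp_eq (coprod.inr_desc a b) c
  intro w w' h
  obtain ⟨x, rfl⟩ | ⟨y, rfl⟩ := cases w <;> obtain ⟨x', rfl⟩ | ⟨y', rfl⟩ := cases w'
  · rw [hinl, hinl] at h
    rw [injective_of_mono (a.app c) h]
  · rw [hinl, hinr] at h
    exact absurd h (hab _ _ _)
  · rw [hinr, hinl] at h
    exact absurd h.symm (hab _ _ _)
  · rw [hinr, hinr] at h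
    rw [injective_of_mono (b.app c) h]

end TypeValuedFunctors

instance preservesColimits_prod_functor_flip_obj (X : Psh C) :
    PreservesColimits (prod.functor.flip.obj X) :=
  have := preservesColimits_of_natIso (CartesianMonoidalCategory.tensorLeftIsoProd X)
  preservesColimits_of_natIso (F := prod.functor.obj X)
    (NatIso.ofComponents (fun Y => prod.braiding X Y) (fun u => braid_natural (𝟙 X) u))

variable (C) in
noncomputable abbrev zerothFunctor : Psh C ⥤ Psh C :=
  (evaluation Cᵒᵖ (Type u)).obj (op (⊤_ C)) ⋙ Functor.const Cᵒᵖ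

noncomputable def zerothIncl : zerothFunctor C ⟶ 𝟭 (Psh C) where
  app := iX
  naturality _ _ u := iX_natural u

noncomputable def cylInl : 𝟭 (Psh C) ⋙ prod.functor.flip.obj I ⟶ cyl I J j where
  app _ := pushout.inl _ _
  naturality _ _ _ := (pushout.inl_desc _ _ _).symm

noncomputable def cylInr : zerothFunctor C ⋙ prod.functor.flip.obj J ⟶ cyl I J j where
  app _ := pushout.inr _ _
  naturality _ _ _ := (pushout.inr_desc _ _ _).symm

lemma isPushout_cylInl_cylInr :
    IsPushout (Functor.whiskerRight zerothIncl (prod.functor.flip.obj I))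
      (Functor.whiskerLeft (zerothFunctor C) (prod.functor.flip.map j))
      (cylInl I J j) (cylInr I J j) :=
  .of_forall_isPushout_app fun _ => .of_hasPushout _ _

instance preservesColimits_cyl : PreservesColimits (cyl I J j) :=
  preservesColimitsOfSize_of_isPushout (isPushout_cylInl_cylInr I J j)

variable {I J j}

lemma cylIncl_cylProj (e : ⊤_ (Psh C) ⟶ I) (X : Psh C) :
    cylIncl I J j e X ≫ cylProj I J j X = 𝟙 X := by
  dsimp only [cylIncl, cylProj, cylObj]
  rw [Category.assoc, pushout.inl_desc, prod.lift_fst]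

lemma cylProj_naturality {X Y : Psh C} (u : X ⟶ Y) :
    (cyl I J j).map u ≫ cylProj I J j Y = cylProj I J j X ≫ u := by
  show cylMap I J j u ≫ _ = _
  dsimp only [cylMap, cylProj, cylObj]
  apply pushout.hom_ext
  · erw [pushout.inl_desc_assoc, Category.assoc, pushout.inl_desc, pushout.inl_desc_assoc,
      prod.map_fst]
  · erw [pushout.inr_desc_assoc, Category.assoc, pushout.inr_desc, pushout.inr_desc_assoc,
      prod.map_fst_assoc, Category.assoc, iX_natural]

lemma cylIncl_naturality {X Y : Psh C} (u : X ⟶ Y) (e : ⊤_ (Psh C) ⟶ I) :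
    u ≫ cylIncl I J j e Y = cylIncl I J j e X ≫ (cyl I J j).map u :=
  ((isPullback_prod_lift_id u (by rw [← Category.assoc, terminal.comp_from])).toCommSq.vert_comp
    ⟨(cylInl I J j).naturality u⟩).w

section MonoInterval

variable [Mono j]

instance : Mono (Functor.whiskerLeft (zerothFunctor C) (prod.functor.flip.map j)) :=
  (NatTrans.mono_iff_mono_app _).2 fun X => inferInstanceAs (Mono (prod.map (𝟙 (zeroth X)) j))

instance : Mono (cylInl I J j) :=
  Adhesive.mono_of_isPushout_of_mono_right (isPushout_cylInl_cylInr I J j)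

lemma isPullback_cylInl_cylInr :
    IsPullback (Functor.whiskerRight zerothIncl (prod.functor.flip.obj I))
      (Functor.whiskerLeft (zerothFunctor C) (prod.functor.flip.map j))
      (cylInl I J j) (cylInr I J j) :=
  Adhesive.isPullback_of_isPushout_of_mono_right (isPushout_cylInl_cylInr I J j)

lemma isPullback_cylInl_naturality {K L : Psh C} (f : K ⟶ L) :
    IsPullback (prod.map f (𝟙 I)) ((cylInl I J j).app K) ((cylInl I J j).app L)
      ((cyl I J j).map f) := by
  refine .of_forall_isPullback_app fun c => (Types.isPullback_iff _ _ _ _).2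
    ⟨NatTrans.congr_app ((cylInl I J j).naturality f) c,
      fun p p' h => injective_of_mono (((cylInl I J j).app K).app c) h.2, fun a z h => ?_⟩
  rcases Types.eq_or_eq_of_isPushout (((isPushout_cylInl_cylInr I J j).app K).app c) z with
    ⟨a', rfl⟩ | ⟨b, rfl⟩
  · refine ⟨a', injective_of_mono (((cylInl I J j).app L).app c) ?_, rfl⟩
    exact (app_apply_of_comp_eq ((cylInl I J j).naturality f) c a').trans h.symm
  -- `b` comes from `K₀ × I` since its image does and the square of products is a pullback
  · have hb := (app_apply_of_comp_eq ((cylInr I J j).naturality f) c b).trans h.symm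
    obtain ⟨s, hs₁, hs₂⟩ := Types.exists_of_isPullback
      ((isPullback_cylInl_cylInr.app L).app c) a _ hb.symm
    obtain ⟨q, hq₁, hq₂⟩ := Types.exists_of_isPullback
      ((isPullback_prod_map_id (zerothMap f) j).app c) b s hs₂.symm
    refine ⟨(prod.map (iX K) (𝟙 I)).app c q, ?_, ?_⟩
    · rw [← hs₁, ← hq₂]
      exact app_apply_of_comp_eq
        ((Functor.whiskerRight zerothIncl (prod.functor.flip.obj I)).naturality f).symm c q
    · rw [← hq₁]
      exact app_apply_of_comp_eq pushout.condition c q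

lemma isPullback_cylIncl (e : ⊤_ (Psh C) ⟶ I) {K L : Psh C} (f : K ⟶ L) :
    IsPullback f (cylIncl I J j e K) (cylIncl I J j e L) ((cyl I J j).map f) :=
  (isPullback_prod_lift_id f (by rw [← Category.assoc, terminal.comp_from])).paste_vert
    (isPullback_cylInl_naturality f)

lemma mono_cyl_map {K L : Psh C} (f : K ⟶ L) [Mono f] : Mono ((cyl I J j).map f) := by
  refine (NatTrans.mono_iff_mono_app _).2 fun c => (mono_iff_injective _).2 ?_
  have key := (isPullback_cylInl_naturality (J := J) (j := j) f).app c
  have inl_case (a : (K ⨯ I).obj c) (z : ((cyl I J j).obj K).obj c)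
      (h : ((cyl I J j).map f).app c (((cylInl I J j).app K).app c a) =
        ((cyl I J j).map f).app c z) : ((cylInl I J j).app K).app c a = z := by
    obtain ⟨p, hp, rfl⟩ := Types.exists_of_isPullback key _ z
      ((app_apply_of_comp_eq ((cylInl I J j).naturality f) c a).trans h)
    exact congr_arg _ (injective_of_mono ((prod.map f (𝟙 I)).app c) hp).symm
  have hpushout := ((isPushout_cylInl_cylInr I J j).app L).app c
  intro z z' h
  rcases Types.eq_or_eq_of_isPushout (((isPushout_cylInl_cylInr I J j).app K).app c) z with
    ⟨a, rfl⟩ | ⟨b, rfl⟩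
  · exact inl_case a z' h
  rcases Types.eq_or_eq_of_isPushout (((isPushout_cylInl_cylInr I J j).app K).app c) z' with
    ⟨a', rfl⟩ | ⟨b', rfl⟩
  · exact (inl_case a' _ h.symm).symm
  have hbb' := (app_apply_of_comp_eq ((cylInr I J j).naturality f) c b).trans
    (h.trans (app_apply_of_comp_eq ((cylInr I J j).naturality f) c b').symm)
  rcases Types.eq_or_mem_range_of_isPushout hpushout
      (injective_of_mono (((Functor.whiskerLeft (zerothFunctor C)
        (prod.functor.flip.map j)).app L).app c)) hbb' with hb | ⟨s, hs⟩
  · have : Mono (zerothMap f) := inferInstanceAs (Mono ((zerothFunctor C).map f))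
    rw [injective_of_mono ((prod.map (zerothMap f) (𝟙 J)).app c) hb]
  -- the common image comes from `L × I`, hence `inr b` comes from `K × I`
  · obtain ⟨p, -, hp⟩ := Types.exists_of_isPullback key _ (((cylInr I J j).app K).app c b)
      ((ConcreteCategory.congr_hom hpushout.w s).trans
        ((congr_arg _ hs).trans (app_apply_of_comp_eq ((cylInr I J j).naturality f) c b)))
    rw [← hp] at h ⊢
    exact inl_case p _ h

lemma mono_coprod_desc_cylIncl {e₀ e₁ : ⊤_ (Psh C) ⟶ I}
    (sep : ∀ (c : Cᵒᵖ) (u v : (⊤_ (Psh C)).obj c), e₀.app c u ≠ e₁.app c v) (X : Psh C) :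
    Mono (coprod.desc (cylIncl I J j e₀ X) (cylIncl I J j e₁ X)) :=
  have := mono_of_mono_fac (cylIncl_cylProj (J := J) (j := j) e₀ X)
  have := mono_of_mono_fac (cylIncl_cylProj (J := J) (j := j) e₁ X)
  mono_coprod_desc_of_disjoint _ _ fun c x y h =>
    sep c ((terminal.from X).app c x) ((terminal.from X).app c y) <| by
      have h' := congr_arg ((prod.snd (X := X) (Y := I)).app c)
        (injective_of_mono (((cylInl I J j).app X).app c) h)
      exact (app_apply_of_comp_eq (prod.lift_snd _ _) c x).symm.trans
        (h'.trans (app_apply_of_comp_eq (prod.lift_snd _ _) c y))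

end MonoInterval

/-- If `I` is a separating interval (with points `e₀`, `e₁`) and
`j : I ⟶ J` is a monomorphism of intervals, then `𝒥`, together with `∂⁰`, `∂¹`
and `σ`, is a functorial cylinder which is an elementary homotopical datum:

* `∂⁰`, `∂¹` and `σ` are natural, `σ_X ∘ ∂^ε_X = id` and `(∂⁰_X, ∂¹_X) : X ⊔ X ⟶ 𝒥(X)`
  is a monomorphism (functorial cylinder);
* (HD1) `𝒥` preserves small colimits and monomorphisms;
* (HD2) for every monomorphism `K ⟶ L` the naturality squares of `∂⁰` and `∂¹`
  are pullbacks. -/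
theorem cyl_is_elementary_homotopical_datum
    (e₀ e₁ : ⊤_ (Psh C) ⟶ I)
    (sep : ∀ (c : Cᵒᵖ) (u v : (⊤_ (Psh C)).obj c), e₀.app c u ≠ e₁.app c v)
    (hj : Mono j) :
    -- naturality of the structure maps
    (∀ {X Y : Psh C} (u : X ⟶ Y) (e : ⊤_ (Psh C) ⟶ I),
        u ≫ cylIncl I J j e Y = cylIncl I J j e X ≫ (cyl I J j).map u) ∧
    (∀ {X Y : Psh C} (u : X ⟶ Y),
        (cyl I J j).map u ≫ cylProj I J j Y = cylProj I J j X ≫ u) ∧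
    -- cylinder axioms
    (∀ X : Psh C, cylIncl I J j e₀ X ≫ cylProj I J j X = 𝟙 X) ∧
    (∀ X : Psh C, cylIncl I J j e₁ X ≫ cylProj I J j X = 𝟙 X) ∧
    (∀ X : Psh C, Mono (coprod.desc (cylIncl I J j e₀ X) (cylIncl I J j e₁ X))) ∧
    -- (HD1): `𝒥` preserves small colimits and monomorphisms
    Nonempty (PreservesColimitsOfSize.{u, u} (cyl I J j)) ∧
    (∀ {K L : Psh C} (f : K ⟶ L), Mono f → Mono ((cyl I J j).map f)) ∧
    -- (HD2): the naturality squares of `∂⁰` and `∂¹` at a monomorphism are pullbacks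
    (∀ {K L : Psh C} (f : K ⟶ L), Mono f → ∀ e ∈ ({e₀, e₁} : Set (⊤_ (Psh C) ⟶ I)),
        IsPullback f (cylIncl I J j e K) (cylIncl I J j e L) ((cyl I J j).map f)) :=
  ⟨cylIncl_naturality, cylProj_naturality, cylIncl_cylProj e₀, cylIncl_cylProj e₁,
    mono_coprod_desc_cylIncl sep, ⟨inferInstance⟩, fun f _ => mono_cyl_map f,
    fun f _ e _ => isPullback_cylIncl e f⟩

end Paper
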